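/- Let j ≥ 2 be an even integer and a, b, α reals with 0 ≤ α ≤ 1. Consider the general complementary Bannai-Ito recurrence coefficients A_n = -(n+2ρ₂-2r₂+1)(n+2ρ₂-2r₁+1)/(4(n+g+1)) (n even), A_n = -(n+1)(n-2r₁-2r₂+1)/(4(n+g+1)) (n odd), C_n = (n+2ρ₁-2r₁+1)(n+2ρ₁-2r₂+1)/(4(n+g+1)) (n even), C_n = (n+2g+1)(n+2ρ₁+2ρ₂+1)/(4(n+g+1)) (n odd), g = ρ₁+ρ₂-r₁-r₂, under the parametrization ρ₁ - r₁ = -(j+1)/2 + e₁ t, ρ₂ - r₂ = -(j+1)/2 + e₂ t, ρ₁ = (b-j-1+a)/4, ρ₂ = (b-j-1-a)/4, with e₁/(e₁+e₂) = α. Then for n = j (even): the limit as t → 0 of A_j exists and equals (1-α)a/2, and the limit as t → 0 of C_j exists and equals αa/2. -/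

import Mathlib

open Filter

/-- Recurrence coefficient `A_n` of the general complementary Bannai-Ito polynomials. -/
noncomputable def Acbi (ρ₁ ρ₂ r₁ r₂ : ℝ) (n : ℕ) : ℝ :=
  if n % 2 = 0 then
    -(((n : ℝ) + 2 * ρ₂ - 2 * r₂ + 1) * ((n : ℝ) + 2 * ρ₂ - 2 * r₁ + 1)) /
      (4 * ((n : ℝ) + (ρ₁ + ρ₂ - r₁ - r₂) + 1))
  else
    -(((n : ℝ) + 1) * ((n : ℝ) - 2 * r₁ - 2 * r₂ + 1)) /
      (4 * ((n : ℝ) + (ρ₁ + ρ₂ - r₁ - r₂) + 1))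

/-- Recurrence coefficient `C_n` of the general complementary Bannai-Ito polynomials. -/
noncomputable def Ccbi (ρ₁ ρ₂ r₁ r₂ : ℝ) (n : ℕ) : ℝ :=
  if n % 2 = 0 then
    (((n : ℝ) + 2 * ρ₁ - 2 * r₁ + 1) * ((n : ℝ) + 2 * ρ₁ - 2 * r₂ + 1)) /
      (4 * ((n : ℝ) + (ρ₁ + ρ₂ - r₁ - r₂) + 1))
  else
    (((n : ℝ) + 2 * (ρ₁ + ρ₂ - r₁ - r₂) + 1) * ((n : ℝ) + 2 * ρ₁ + 2 * ρ₂ + 1)) /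
      (4 * ((n : ℝ) + (ρ₁ + ρ₂ - r₁ - r₂) + 1))

open Topology

/-
At `n = j` the first factors of the numerators of `A_j` and `C_j` are `2 e₂ t` and `2 e₁ t`,
and the denominator `4 (j + g + 1)` is `4 (e₁ + e₂) t`, so the common factor `t` cancels and
the coefficients extend continuously to `t = 0`.
-/

theorem tendsto_mul_mul_div_mul_nhdsNE {u c : ℝ} {v : ℝ → ℝ} (hc : c ≠ 0)
    (hv : ContinuousAt v 0) :
    Tendsto (fun t => u * t * v t / (c * t)) (𝓝[≠] 0) (𝓝 (u * v 0 / c)) := by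
  have hlim : Tendsto (fun t => u * v t / c) (𝓝[≠] 0) (𝓝 (u * v 0 / c)) :=
    ((hv.const_mul u).div_const c).tendsto.mono_left nhdsWithin_le_nhds
  refine hlim.congr' ?_
  filter_upwards [self_mem_nhdsWithin] with t (ht : t ≠ 0)
  field_simp

section Para

variable {j : ℕ} (hj : Even j) (a b e₁ e₂ t : ℝ)
include hj

theorem Acbi_para_eq :
    Acbi ((b - j - 1 + a) / 4) ((b - j - 1 - a) / 4)
        ((b - j - 1 + a) / 4 + ((j : ℝ) + 1) / 2 - e₁ * t)
        ((b - j - 1 - a) / 4 + ((j : ℝ) + 1) / 2 - e₂ * t) j =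
      -2 * e₂ * t * (2 * e₁ * t - a) / (4 * (e₁ + e₂) * t) := by
  simp only [Acbi, Nat.even_iff.mp hj, if_true]
  ring

theorem Ccbi_para_eq :
    Ccbi ((b - j - 1 + a) / 4) ((b - j - 1 - a) / 4)
        ((b - j - 1 + a) / 4 + ((j : ℝ) + 1) / 2 - e₁ * t)
        ((b - j - 1 - a) / 4 + ((j : ℝ) + 1) / 2 - e₂ * t) j =
      2 * e₁ * t * (a + 2 * e₂ * t) / (4 * (e₁ + e₂) * t) := by
  simp only [Ccbi, Nat.even_iff.mp hj, if_true]
  ring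

end Para

theorem stmt16_general (j : ℕ) (hj : Even j) (a b e₁ e₂ : ℝ)
    (he : e₁ + e₂ ≠ 0) :
    Tendsto (fun t : ℝ =>
        Acbi ((b - j - 1 + a) / 4) ((b - j - 1 - a) / 4)
          ((b - j - 1 + a) / 4 + ((j : ℝ) + 1) / 2 - e₁ * t)
          ((b - j - 1 - a) / 4 + ((j : ℝ) + 1) / 2 - e₂ * t) j)
      (nhdsWithin 0 {(0 : ℝ)}ᶜ) (nhds ((1 - e₁ / (e₁ + e₂)) * a / 2)) ∧
    Tendsto (fun t : ℝ =>
        Ccbi ((b - j - 1 + a) / 4) ((b - j - 1 - a) / 4)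
          ((b - j - 1 + a) / 4 + ((j : ℝ) + 1) / 2 - e₁ * t)
          ((b - j - 1 - a) / 4 + ((j : ℝ) + 1) / 2 - e₂ * t) j)
      (nhdsWithin 0 {(0 : ℝ)}ᶜ) (nhds ((e₁ / (e₁ + e₂)) * a / 2)) := by
  have hc : 4 * (e₁ + e₂) ≠ 0 := mul_ne_zero four_ne_zero he
  simp_rw [Acbi_para_eq hj, Ccbi_para_eq hj]
  constructor
  · convert tendsto_mul_mul_div_mul_nhdsNE (u := -2 * e₂) hc
      (v := fun t => 2 * e₁ * t - a) (by fun_prop) using 2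
    field_simp
    ring
  · convert tendsto_mul_mul_div_mul_nhdsNE (u := 2 * e₁) hc
      (v := fun t => a + 2 * e₂ * t) (by fun_prop) using 2
    field_simp
    ring

/-- Under the para truncation parametrization `ρ₁ - r₁ = -(j+1)/2 + e₁ t`,
`ρ₂ - r₂ = -(j+1)/2 + e₂ t`, `ρ₁ = (b-j-1+a)/4`, `ρ₂ = (b-j-1-a)/4`, the middle
coefficients `A_j`, `C_j` tend to `(1-α)a/2` and `αa/2` as `t → 0`, where
`α = e₁/(e₁+e₂)`. -/
theorem stmt16 (j : ℕ) (hj : Even j) (hj0 : 2 ≤ j) (a b e₁ e₂ : ℝ)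
    (he₁ : e₁ ≠ 0) (he₂ : e₂ ≠ 0) (he : e₁ + e₂ ≠ 0) :
    Tendsto (fun t : ℝ =>
        Acbi ((b - j - 1 + a) / 4) ((b - j - 1 - a) / 4)
          ((b - j - 1 + a) / 4 + ((j : ℝ) + 1) / 2 - e₁ * t)
          ((b - j - 1 - a) / 4 + ((j : ℝ) + 1) / 2 - e₂ * t) j)
      (nhdsWithin 0 {(0 : ℝ)}ᶜ) (nhds ((1 - e₁ / (e₁ + e₂)) * a / 2)) ∧
    Tendsto (fun t : ℝ =>
        Ccbi ((b - j - 1 + a) / 4) ((b - j - 1 - a) / 4)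
          ((b - j - 1 + a) / 4 + ((j : ℝ) + 1) / 2 - e₁ * t)
          ((b - j - 1 - a) / 4 + ((j : ℝ) + 1) / 2 - e₂ * t) j)
      (nhdsWithin 0 {(0 : ℝ)}ᶜ) (nhds ((e₁ / (e₁ + e₂)) * a / 2)) :=
  stmt16_general j hj a b e₁ e₂ he
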